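/- Let n ≥ 1, let G be a simple graph on Fin n, and let J : Fin n → Fin n → ℝ be symmetric with J k l ≠ 0 ↔ G.Adj k l. Define the Ising ZZ-Hamiltonian H_ZZ := Σ over pairs k < l of (J k l : ℂ) • (Z k * Z l), a Hermitian diagonal matrix on n qubits. Then there exists a local unitary K with K * H_ZZ * Kᴴ = -H_ZZ (i.e. the evolution exp(-itH_ZZ) is type-I invertible by local unitary operations) if and only if G is bipartite, i.e. G.Colorable 2. -/

import Mathlib

open Matrix

/-- A `2^n`-dimensional matrix (indexed by configurations `Fin n → Fin 2`) is a
local unitary if it is the `n`-fold Kronecker product of unitary 2×2 matrices. -/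
def IsLocalUnitary {n : ℕ} (K : Matrix (Fin n → Fin 2) (Fin n → Fin 2) ℂ) : Prop :=
  ∃ u : Fin n → Matrix (Fin 2) (Fin 2) ℂ,
    (∀ ℓ, (u ℓ)ᴴ * u ℓ = 1) ∧ ∀ f g, K f g = ∏ ℓ, u ℓ (f ℓ) (g ℓ)

/-- The Pauli-z operator acting on qubit `ℓ`. -/
def Zop {n : ℕ} (ℓ : Fin n) : Matrix (Fin n → Fin 2) (Fin n → Fin 2) ℂ :=
  fun f g => if f = g then (-1 : ℂ) ^ ((f ℓ : ℕ)) else 0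

/-- The Pauli-x operator acting on qubit `ℓ`. -/
def Xop {n : ℕ} (ℓ : Fin n) : Matrix (Fin n → Fin 2) (Fin n → Fin 2) ℂ :=
  fun f g => if f ℓ ≠ g ℓ ∧ ∀ m, m ≠ ℓ → f m = g m then 1 else 0

/-- The Pauli-y operator acting on qubit `ℓ`. -/
def Yop {n : ℕ} (ℓ : Fin n) : Matrix (Fin n → Fin 2) (Fin n → Fin 2) ℂ :=
  fun f g => if f ℓ ≠ g ℓ ∧ ∀ m, m ≠ ℓ → f m = g m then
    Complex.I * (-1 : ℂ) ^ ((f ℓ : ℕ) + 1) else 0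

/-
The Hamiltonian is diagonal, with entry `E f = ∑_{k<l} J k l s(f k) s(f l)` at the spin
configuration `f`, where `s a = (-1)^a`. If `col` is a proper 2-colouring, conjugating by `X` on
the qubits of colour 1 replaces `f` by `f + col`, which flips the sign of every term of `E` with
`J k l ≠ 0`.

Conversely, let `K = ⊗ u ℓ` conjugate `H` to `-H`. The diagonal entry of `K H Kᴴ` at `f` is the
mean of `E` under the product distribution `q ↦ ∏ ℓ |u ℓ (f ℓ) (q ℓ)|²`, so by independence it is
`∑_{k<l} J k l m k m l`, where `m ℓ = t ℓ s(f ℓ)` is the mean of `s(q ℓ)` and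
`t ℓ = |u ℓ 0 0|² - |u ℓ 0 1|²` is real (the columns of `u ℓ` are unit vectors). Comparing the
coefficients of `s(f k) s(f l)` with those of `-E` gives `t k t l = -1` on every edge, so the
sign of `t` is a 2-colouring.
-/

open Finset

def spin (a : Fin 2) : ℂ := (-1) ^ (a : ℕ)

@[simp] lemma spin_zero : spin 0 = 1 := by simp [spin]

@[simp] lemma spin_one : spin 1 = -1 := by simp [spin]

lemma spin_add (a b : Fin 2) : spin (a + b) = spin a * spin b := by
  fin_cases a <;> fin_cases b <;> simp [spin]

lemma spin_mul_spin_of_ne {a b : Fin 2} (h : a ≠ b) : spin a * spin b = -1 := by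
  fin_cases a <;> fin_cases b <;> simp_all

lemma sum_prod_mul_mul {ι α R : Type*} [Fintype ι] [DecidableEq ι] [Fintype α] [CommSemiring R]
    (w : ι → α → R) (hw : ∀ i, ∑ a, w i a = 1) (g h : α → R) {k l : ι} (hkl : k ≠ l) :
    ∑ q : ι → α, (∏ i, w i (q i)) * (g (q k) * h (q l)) =
      (∑ a, w k a * g a) * ∑ a, w l a * h a := by
  set W : ι → α → R := fun i a => w i a * ((if i = k then g a else 1) * (if i = l then h a else 1))
  have hW : ∀ i, ∑ a, W i a =
      (if i = k then ∑ a, w k a * g a else 1) * (if i = l then ∑ a, w l a * h a else 1) := by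
    intro i
    by_cases hik : i = k
    · subst hik; simp [W, hkl]
    · by_cases hil : i = l
      · subst hil; simp [W, hik]
      · simp [W, hik, hil, hw]
  calc ∑ q : ι → α, (∏ i, w i (q i)) * (g (q k) * h (q l))
      = ∑ q : ι → α, ∏ i, W i (q i) := by
        refine sum_congr rfl fun q _ => ?_
        simp only [W, prod_mul_distrib, prod_ite_eq', mem_univ, if_true]
    _ = ∏ i, ∑ a, W i a := (Fintype.prod_sum W).symm
    _ = _ := by simp only [hW, prod_mul_distrib, prod_ite_eq', mem_univ, if_true]

lemma sum_spin_mul_spin_mul_spin_mul_spin {ι : Type*} [LinearOrder ι] {k l k' l' : ι}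
    (hkl : k < l) (hkl' : k' < l') :
    ∑ a, ∑ b, spin a * spin b * (spin (if k' = k then a else if k' = l then b else 0) *
      spin (if l' = k then a else if l' = l then b else 0)) =
      if k' = k ∧ l' = l then 4 else 0 := by
  by_cases h1 : k' = k <;> by_cases h2 : k' = l <;> by_cases h3 : l' = k <;>
    by_cases h4 : l' = l <;> simp [h1, h2, h3, h4, hkl.ne, hkl.ne', Fin.sum_univ_two]
  all_goals first | order | norm_num

section IsingForm

variable {ι : Type*} [Fintype ι] [LinearOrder ι]

def isingForm (c : ι → ι → ℂ) (x : ι → ℂ) : ℂ :=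
  ∑ k, ∑ l, if k < l then c k l * (x k * x l) else 0

lemma isingForm_neg (c : ι → ι → ℂ) (x : ι → ℂ) :
    isingForm (fun k l => -c k l) x = -isingForm c x := by
  simp only [isingForm, ← sum_neg_distrib]
  exact sum_congr rfl fun k _ => sum_congr rfl fun l _ => by split_ifs <;> ring

lemma isingForm_mul (c : ι → ι → ℂ) (t x : ι → ℂ) :
    isingForm c (fun i => t i * x i) = isingForm (fun k l => c k l * (t k * t l)) x := by
  simp only [isingForm]
  exact sum_congr rfl fun k _ => sum_congr rfl fun l _ => by split_ifs <;> ring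

lemma isingForm_spin_comp_add_eq_neg (c : ι → ι → ℂ) (col : ι → Fin 2)
    (hcol : ∀ k l, c k l ≠ 0 → col k ≠ col l) (f : ι → Fin 2) :
    isingForm c (spin ∘ (f + col)) = -isingForm c (spin ∘ f) := by
  have hflip : spin ∘ (f + col) = fun i => spin (col i) * (spin ∘ f) i := by
    funext i
    simp [spin_add, mul_comm]
  rw [hflip, isingForm_mul, ← isingForm_neg]
  congr; funext k l
  by_cases hc : c k l = 0
  · simp [hc]
  · rw [spin_mul_spin_of_ne (hcol k l hc), mul_neg_one]

lemma sum_prod_mul_isingForm {α : Type*} [Fintype α] (w : ι → α → ℂ) (hw : ∀ i, ∑ a, w i a = 1)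
    (c : ι → ι → ℂ) (g : α → ℂ) :
    ∑ q : ι → α, (∏ i, w i (q i)) * isingForm c (g ∘ q) =
      isingForm c (fun i => ∑ a, w i a * g a) := by
  simp only [isingForm, Function.comp_apply]
  conv_lhs => simp only [mul_sum]
  rw [sum_comm]
  refine sum_congr rfl fun k _ => ?_
  rw [sum_comm]
  refine sum_congr rfl fun l _ => ?_
  split_ifs with hkl
  · rw [← sum_prod_mul_mul w hw g g hkl.ne, mul_sum]
    exact sum_congr rfl fun q _ => by ring
  · simp

/-- The coefficient of `x k * x l` is read off from the four spin configurations supported on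
`{k, l}`. -/
lemma sum_spin_mul_spin_mul_isingForm (c : ι → ι → ℂ) {k l : ι} (hkl : k < l) :
    ∑ a, ∑ b, spin a * spin b *
      isingForm c (spin ∘ fun i => if i = k then a else if i = l then b else 0) = 4 * c k l := by
  calc _ = ∑ k', ∑ l', if k' < l' then c k' l' * ∑ a, ∑ b, spin a * spin b *
        (spin (if k' = k then a else if k' = l then b else 0) *
          spin (if l' = k then a else if l' = l then b else 0)) else 0 := by
        simp only [isingForm, Function.comp_apply, mul_sum, mul_ite, mul_zero]
        rw [sum_comm]
        simp_rw [sum_comm (s := (univ : Finset (Fin 2))) (t := (univ : Finset ι))]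
        refine sum_congr rfl fun k' _ => sum_congr rfl fun l' _ => ?_
        by_cases hk'l' : k' < l'
        · simp only [hk'l', if_true]
          rw [sum_comm]
          exact sum_congr rfl fun a _ => sum_congr rfl fun b _ => by ring
        · simp [hk'l']
    _ = ∑ k', ∑ l', if k' = k ∧ l' = l then 4 * c k l else 0 := by
        refine sum_congr rfl fun k' _ => sum_congr rfl fun l' _ => ?_
        by_cases hk'l' : k' < l'
        · rw [if_pos hk'l', sum_spin_mul_spin_mul_spin_mul_spin hkl hk'l']
          split_ifs with h
          · obtain ⟨rfl, rfl⟩ := h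
            ring
          · rw [mul_zero]
        · rw [if_neg hk'l', if_neg]
          rintro ⟨rfl, rfl⟩
          exact hk'l' hkl
    _ = 4 * c k l := by simp [ite_and]

lemma coeff_eq_of_isingForm_spin_comp_eq {c d : ι → ι → ℂ}
    (h : ∀ f : ι → Fin 2, isingForm c (spin ∘ f) = isingForm d (spin ∘ f)) {k l : ι}
    (hkl : k < l) : c k l = d k l := by
  have h4 := sum_spin_mul_spin_mul_isingForm c hkl
  simp only [h, sum_spin_mul_spin_mul_isingForm d hkl] at h4
  linear_combination -h4 / 4

end IsingForm

lemma Zop_eq_diagonal {n : ℕ} (ℓ : Fin n) : Zop ℓ = diagonal fun f => spin (f ℓ) := by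
  ext f g
  simp [Zop, diagonal_apply, spin]

lemma sum_Zop_mul_Zop_eq_diagonal {n : ℕ} (c : Fin n → Fin n → ℂ) :
    (∑ k, ∑ l, if k < l then c k l • (Zop k * Zop l) else 0) =
      diagonal fun f => isingForm c (spin ∘ f) := by
  ext f g
  by_cases hfg : f = g
  · subst hfg
    simp [Zop_eq_diagonal, isingForm, Matrix.sum_apply, apply_ite (fun M : Matrix _ _ ℂ => M f f)]
  · simp [Zop_eq_diagonal, isingForm, Matrix.sum_apply, hfg,
      apply_ite (fun M : Matrix _ _ ℂ => M f g)]

section Unitary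

variable {u : Matrix (Fin 2) (Fin 2) ℂ}

/-- The entry `(u σ_z uᴴ) 0 0`; for unitary `u` the entry at `1 1` is its negative. -/
def blochZ (u : Matrix (Fin 2) (Fin 2) ℂ) : ℝ :=
  Complex.normSq (u 0 0) - Complex.normSq (u 0 1)

lemma sum_normSq_eq_one (hu : uᴴ * u = 1) (a : Fin 2) :
    ∑ s, (Complex.normSq (u a s) : ℂ) = 1 := by
  have h : (u * uᴴ) a a = 1 := by rw [mul_eq_one_comm.mp hu, one_apply_eq]
  rw [← h, mul_apply]
  exact sum_congr rfl fun s _ => by rw [← Complex.mul_conj]; rfl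

lemma sum_normSq_mul_spin (hu : uᴴ * u = 1) (a : Fin 2) :
    ∑ s, (Complex.normSq (u a s) : ℂ) * spin s = blochZ u * spin a := by
  have hcol : ∀ s, Complex.normSq (u 0 s) + Complex.normSq (u 1 s) = 1 := by
    intro s
    have h : (uᴴ * u) s s = 1 := by rw [hu, one_apply_eq]
    simp only [mul_apply, conjTranspose_apply, Fin.sum_univ_two, Complex.star_def] at h
    rw [← Complex.ofReal_inj]
    push_cast
    rw [← Complex.mul_conj, ← Complex.mul_conj]
    linear_combination h
  fin_cases a
  · simp [Fin.sum_univ_two, blochZ]; ring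
  · simp [Fin.sum_univ_two, blochZ]
    norm_cast
    linarith [hcol 0, hcol 1]

end Unitary

lemma conj_diagonal_isingForm_apply_self {n : ℕ} {K : Matrix (Fin n → Fin 2) (Fin n → Fin 2) ℂ}
    {u : Fin n → Matrix (Fin 2) (Fin 2) ℂ} (hu : ∀ ℓ, (u ℓ)ᴴ * u ℓ = 1)
    (hK : ∀ f g, K f g = ∏ ℓ, u ℓ (f ℓ) (g ℓ)) (c : Fin n → Fin n → ℂ) (f : Fin n → Fin 2) :
    (K * diagonal (fun g => isingForm c (spin ∘ g)) * Kᴴ) f f =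
      isingForm c (fun ℓ => blochZ (u ℓ) * spin (f ℓ)) := by
  have hweight : ∀ g, K f g * star (K f g) = ∏ ℓ, (Complex.normSq (u ℓ (f ℓ) (g ℓ)) : ℂ) := by
    intro g
    rw [Complex.star_def, Complex.mul_conj, hK, map_prod]
    push_cast
    rfl
  calc (K * diagonal (fun g => isingForm c (spin ∘ g)) * Kᴴ) f f
      = ∑ g, (∏ ℓ, (Complex.normSq (u ℓ (f ℓ) (g ℓ)) : ℂ)) * isingForm c (spin ∘ g) := by
        rw [mul_apply]
        refine sum_congr rfl fun g _ => ?_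
        rw [mul_diagonal, conjTranspose_apply, ← hweight]
        ring
    _ = isingForm c (fun ℓ => ∑ s, (Complex.normSq (u ℓ (f ℓ) s) : ℂ) * spin s) :=
        sum_prod_mul_isingForm _ (fun ℓ => sum_normSq_eq_one (hu ℓ) (f ℓ)) c spin
    _ = _ := by simp only [sum_normSq_mul_spin (hu _)]

lemma exists_mul_eq_neg_one_of_conj_eq_neg {n : ℕ} (c : Fin n → Fin n → ℂ)
    {K : Matrix (Fin n → Fin 2) (Fin n → Fin 2) ℂ} (hK : IsLocalUnitary K)
    (h : K * diagonal (fun f => isingForm c (spin ∘ f)) * Kᴴ =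
      -diagonal (fun f => isingForm c (spin ∘ f))) :
    ∃ t : Fin n → ℝ, ∀ k l, k < l → c k l ≠ 0 → t k * t l = -1 := by
  obtain ⟨u, hu, hKu⟩ := hK
  refine ⟨fun ℓ => blochZ (u ℓ), fun k l hkl hc => ?_⟩
  have hform : ∀ f : Fin n → Fin 2,
      isingForm (fun k l => c k l * (blochZ (u k) * blochZ (u l))) (spin ∘ f) =
        isingForm (fun k l => -c k l) (spin ∘ f) := by
    intro f
    have hf := congrFun (congrFun h f) f
    rwa [conj_diagonal_isingForm_apply_self hu hKu, isingForm_mul, neg_apply, diagonal_apply_eq,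
      ← isingForm_neg] at hf
  have hcoeff := coeff_eq_of_isingForm_spin_comp_eq hform hkl
  have : ((blochZ (u k) * blochZ (u l) : ℝ) : ℂ) = -1 := by
    push_cast
    exact mul_left_cancel₀ hc (by linear_combination hcoeff)
  exact_mod_cast this

lemma permMatrix_mul_diagonal_mul_conjTranspose {α R : Type*} [Fintype α] [DecidableEq α]
    [NonAssocSemiring R] [StarRing R] (σ : Equiv.Perm α) (d : α → R) :
    σ.permMatrix R * diagonal d * (σ.permMatrix R)ᴴ = diagonal (d ∘ σ) := by
  rw [conjTranspose_permMatrix, PEquiv.toMatrix_toPEquiv_mul, PEquiv.mul_toMatrix_toPEquiv,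
    Equiv.Perm.inv_def, Equiv.symm_symm, submatrix_submatrix, Function.comp_id,
    Function.id_comp, submatrix_diagonal_equiv]

lemma isLocalUnitary_permMatrix_addRight {n : ℕ} (col : Fin n → Fin 2) :
    IsLocalUnitary ((Equiv.addRight col).permMatrix ℂ) := by
  refine ⟨fun ℓ => (Equiv.addRight (col ℓ)).permMatrix ℂ, fun ℓ => ?_, fun f g => ?_⟩
  · rw [conjTranspose_permMatrix, ← permMatrix_mul, mul_inv_cancel, permMatrix_one]
  · simp [PEquiv.toMatrix_apply, prod_boole, funext_iff]

lemma SimpleGraph.colorable_two_of_mul_neg {V : Type*} {G : SimpleGraph V} (t : V → ℝ)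
    (h : ∀ k l, G.Adj k l → t k * t l < 0) : G.Colorable 2 :=
  ⟨SimpleGraph.Coloring.mk (fun v => if 0 < t v then 0 else 1) fun {k l} hadj heq => by
    have := h k l hadj
    split_ifs at heq with hk hl hl <;> first | exact absurd heq (by decide) | nlinarith⟩

theorem stmt8 (n : ℕ) (G : SimpleGraph (Fin n))
    (J : Fin n → Fin n → ℝ)
    (hJsupp : ∀ k l, J k l ≠ 0 ↔ G.Adj k l) :
    (∃ K : Matrix (Fin n → Fin 2) (Fin n → Fin 2) ℂ, IsLocalUnitary K ∧
        K * (∑ k : Fin n, ∑ l : Fin n,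
            if k < l then ((J k l : ℂ)) • (Zop k * Zop l) else 0) * Kᴴ =
          -(∑ k : Fin n, ∑ l : Fin n,
            if k < l then ((J k l : ℂ)) • (Zop k * Zop l) else 0)) ↔
      G.Colorable 2 := by
  have hJ : ∀ k l, (J k l : ℂ) ≠ 0 ↔ G.Adj k l := fun k l => by
    rw [Complex.ofReal_ne_zero, hJsupp]
  rw [sum_Zop_mul_Zop_eq_diagonal fun k l => (J k l : ℂ)]
  constructor
  · rintro ⟨K, hK, hconj⟩
    obtain ⟨t, ht⟩ := exists_mul_eq_neg_one_of_conj_eq_neg _ hK hconj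
    refine SimpleGraph.colorable_two_of_mul_neg t fun k l hadj => ?_
    rcases hadj.ne.lt_or_gt with hkl | hkl
    · rw [ht k l hkl ((hJ k l).2 hadj)]; norm_num
    · rw [mul_comm, ht l k hkl ((hJ l k).2 hadj.symm)]; norm_num
  · rintro ⟨col⟩
    refine ⟨(Equiv.addRight fun ℓ => col ℓ).permMatrix ℂ,
      isLocalUnitary_permMatrix_addRight _, ?_⟩
    rw [permMatrix_mul_diagonal_mul_conjTranspose, diagonal_neg]
    congr 1
    funext f
    exact isingForm_spin_comp_add_eq_neg _ _ (fun k l hc => col.valid ((hJ k l).1 hc)) f
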